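/- Let α and β be nonnegative integers and i an integer with i > 2α+2β+6. Then c_i(α,β,x) = c_i^{(1)}(α,β,x) + c_i^{(2)}(α,β,x) = 0 for all real x. (In particular, for i = 2α+2β+7 the two summands c_i^{(1)} and c_i^{(2)} are each nonzero in general but cancel.) -/

import Mathlib

/-- The Pochhammer symbol (rising factorial) `(a)_k = a (a+1) ⋯ (a+k-1)`. -/
noncomputable def poch (a : ℝ) (k : ℕ) : ℝ := (ascPochhammer ℝ k).eval a

/-- The first part `c_i^{(1)}(α,β,x)` of the coefficient `c_i(α,β,x)`. -/
noncomputable def cCoef1 (α β : ℝ) (i : ℕ) (x : ℝ) : ℝ :=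
  -((α + β + 2) ^ 2 * (α + β + 3) * (α + β + 4) / ((α + 1) * (β + 1) * (i : ℝ))) *
    (x ^ 2 - 1) * (2 : ℝ) ^ (i - 2) *
    ∑ ℓ ∈ Finset.range (i - 1),
      (-1 : ℝ) ^ ℓ *
      (poch (β + 3) (i - ℓ - 2) * poch (-α - β - 3) (i - ℓ - 2) /
        (Nat.factorial (i - ℓ - 1) * Nat.factorial (i - ℓ - 2) * Nat.factorial ℓ *
          Nat.factorial (i - ℓ - 1))) *
      (∑ m ∈ Finset.range (ℓ + 1),
        poch (-(ℓ : ℝ)) m * poch (α + β + 5) m * poch (α + β + 4) m *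
          poch (β + (i : ℝ) - (ℓ : ℝ) + 1) m /
          (poch (β + 3) m * poch ((i : ℝ) - (ℓ : ℝ)) m * poch ((i : ℝ) - (ℓ : ℝ)) m *
            Nat.factorial m)) *
      ((x + 1) / 2) ^ (ℓ + 1)

/-- The second part `c_i^{(2)}(α,β,x)` of the coefficient `c_i(α,β,x)`. -/
noncomputable def cCoef2 (α β : ℝ) (i : ℕ) (x : ℝ) : ℝ :=
  ((α + β + 2) ^ 2 * (α + β + 3) * (α + β + 4) / ((α + 1) * (β + 1) * (i : ℝ))) *
    (x ^ 2 - 1) * (-2 : ℝ) ^ (i - 2) *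
    ∑ ℓ ∈ Finset.range (i - 1),
      (poch (α + 3) (i - ℓ - 2) * poch (-α - β - 3) (i - ℓ - 2) /
        (Nat.factorial (i - ℓ - 1) * Nat.factorial (i - ℓ - 2) * Nat.factorial ℓ *
          Nat.factorial (i - ℓ - 1))) *
      (∑ m ∈ Finset.range (ℓ + 1),
        poch (-(ℓ : ℝ)) m * poch (α + β + 5) m * poch (α + β + 4) m *
          poch (α + (i : ℝ) - (ℓ : ℝ) + 1) m /
          (poch (α + 3) m * poch ((i : ℝ) - (ℓ : ℝ)) m * poch ((i : ℝ) - (ℓ : ℝ)) m *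
            Nat.factorial m)) *
      ((x - 1) / 2) ^ (ℓ + 1)

/-- The coefficient `c_i(α,β,x) = c_i^{(1)}(α,β,x) + c_i^{(2)}(α,β,x)`. -/
noncomputable def cCoef (α β : ℝ) (i : ℕ) (x : ℝ) : ℝ := cCoef1 α β i x + cCoef2 α β i x

open Finset Polynomial



lemma poch_zero (a : ℝ) : poch a 0 = 1 := by simp [poch]

lemma poch_succ (a : ℝ) (k : ℕ) : poch a (k+1) = poch a k * (a + k) := by
  simp [poch, ascPochhammer_succ_eval]

lemma poch_prod (a : ℝ) (k : ℕ) : poch a k = ∏ t ∈ range k, (a + t) := by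
  induction k with
  | zero => simp [poch_zero]
  | succ n ih => rw [poch_succ, ih, prod_range_succ]

lemma poch_add (a : ℝ) (m n : ℕ) : poch a (m+n) = poch a m * poch (a+m) n := by
  rw [poch_prod, poch_prod, poch_prod, prod_range_add]
  congr 1
  refine prod_congr rfl fun t _ => by push_cast; ring

lemma poch_swap (a : ℝ) (m n : ℕ) : poch a m * poch (a+m) n = poch a n * poch (a+n) m := by
  rw [← poch_add, ← poch_add, add_comm m n]

lemma poch_pos {a : ℝ} (ha : 0 < a) (k : ℕ) : 0 < poch a k := by
  rw [poch_prod]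
  exact prod_pos fun t _ => by positivity

lemma poch_neg_nat_eq_zero {n k : ℕ} (h : n < k) : poch (-(n:ℝ)) k = 0 := by
  rw [poch_prod]
  exact prod_eq_zero (mem_range.2 h) (by simp)

lemma poch_neg_nat {n k : ℕ} (h : k ≤ n) :
    poch (-(n:ℝ)) k * (n-k).factorial = (-1)^k * n.factorial := by
  induction k with
  | zero => simp [poch_zero]
  | succ m ih =>
    have hm : m ≤ n := le_of_lt h
    have h1 : (n - m) = (n - (m+1)) + 1 := by omega
    have h2 : ((n - m : ℕ) : ℝ) = (n : ℝ) - m := by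
      push_cast [Nat.cast_sub hm]; ring
    have ihm := ih hm
    rw [h1, Nat.factorial_succ] at ihm
    rw [poch_succ]
    push_cast at ihm ⊢
    have h3 : ((n - (m+1) : ℕ) : ℝ) + 1 = (n:ℝ) - m := by
      rw [show ((n-m:ℕ):ℝ) = (n:ℝ) - m from h2] at *
      push_cast [Nat.cast_sub h]; ring
    calc poch (-(n:ℝ)) m * (-(n:ℝ) + m) * (n - (m+1)).factorial
        = -(poch (-(n:ℝ)) m * ((((n - (m+1) : ℕ):ℝ) + 1) * ((n - (m+1)).factorial))) := by
          rw [h3]; ring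
      _ = -((-1)^m * n.factorial) := by rw [ihm]
      _ = (-1)^(m+1) * n.factorial := by ring

lemma poch_nat (a b : ℕ) : poch ((a:ℝ)+1) b * a.factorial = (a+b).factorial := by
  induction b with
  | zero => simp [poch_zero]
  | succ m ih =>
    rw [poch_succ, show a + (m+1) = (a+m)+1 from rfl, Nat.factorial_succ]
    push_cast
    calc poch ((a:ℝ)+1) m * ((a:ℝ)+1+m) * a.factorial
        = (poch ((a:ℝ)+1) m * a.factorial) * ((a:ℝ)+m+1) := by ring
      _ = ((a+m).factorial : ℝ) * ((a:ℝ)+m+1) := by rw [← ih]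
      _ = ((a:ℝ)+m+1) * (a+m).factorial := by ring


lemma alt_pow : ∀ n : ℕ, ∀ d : ℕ, d ≤ n →
    ∑ m ∈ range (n+1), (-1:ℝ)^m * (n.choose m) * (m:ℝ)^d
      = if d = n then (-1:ℝ)^n * n.factorial else 0 := by
  intro n
  induction n with
  | zero =>
    intro d hd
    interval_cases d
    simp
  | succ n IH =>
    intro d hd
    match d with
    | 0 =>
      have := Int.alternating_sum_range_choose_of_ne (Nat.succ_ne_zero n)
      have h2 : ((∑ i ∈ range (n+1+1), (-1:ℤ)^i * ((n+1).choose i) : ℤ) : ℝ) = 0 := by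
        rw [this]; simp
      push_cast at h2
      rw [if_neg (by omega)]
      rw [← h2]
      exact Finset.sum_congr rfl fun m _ => by ring
    | e+1 =>
      have step : ∑ m ∈ range (n+2), (-1:ℝ)^m * ((n+1).choose m) * (m:ℝ)^(e+1)
          = -((n:ℝ)+1) * ∑ k ∈ range (n+1), (-1:ℝ)^k * (n.choose k) * ((k:ℝ)+1)^e := by
        rw [Finset.sum_range_succ' (fun m => (-1:ℝ)^m * ((n+1).choose m) * (m:ℝ)^(e+1)) (n+1)]
        simp only [Nat.cast_zero, ne_eq, zero_pow (Nat.succ_ne_zero e), mul_zero, add_zero]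
        rw [Finset.mul_sum]
        refine Finset.sum_congr rfl fun k _ => ?_
        have hc : ((n+1).choose (k+1) : ℝ) * (k+1) = ((n:ℝ)+1) * (n.choose k) := by
          have h := Nat.add_one_mul_choose_eq n k
          exact_mod_cast h.symm
        have : (-1:ℝ)^(k+1) * ((n+1).choose (k+1)) * ((k:ℝ)+1)^(e+1)
            = -((n:ℝ)+1) * ((-1:ℝ)^k * (n.choose k) * ((k:ℝ)+1)^e) := by
          rw [pow_succ ((k:ℝ)+1) e]
          calc (-1:ℝ)^(k+1) * ((n+1).choose (k+1)) * (((k:ℝ)+1)^e * ((k:ℝ)+1))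
              = (-1:ℝ)^(k+1) * (((n+1).choose (k+1) : ℝ) * ((k:ℝ)+1)) * ((k:ℝ)+1)^e := by ring
            _ = (-1:ℝ)^(k+1) * (((n:ℝ)+1) * (n.choose k)) * ((k:ℝ)+1)^e := by rw [hc]
            _ = -((n:ℝ)+1) * ((-1:ℝ)^k * (n.choose k) * ((k:ℝ)+1)^e) := by ring
        push_cast
        rw [this]
      rw [show n+1+1 = n+2 from rfl, step]
      have expand : ∀ k : ℕ, ((k:ℝ)+1)^e = ∑ j ∈ range (e+1), (e.choose j) * (k:ℝ)^j := by
        intro k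
        rw [add_pow]
        exact Finset.sum_congr rfl fun j _ => by rw [one_pow]; ring
      have : ∑ k ∈ range (n+1), (-1:ℝ)^k * (n.choose k) * ((k:ℝ)+1)^e
          = ∑ j ∈ range (e+1), (e.choose j : ℝ) *
              ∑ k ∈ range (n+1), (-1:ℝ)^k * (n.choose k) * (k:ℝ)^j := by
        have l1 : ∀ k ∈ range (n+1), (-1:ℝ)^k * (n.choose k) * ((k:ℝ)+1)^e
            = ∑ j ∈ range (e+1), (e.choose j : ℝ) * ((-1:ℝ)^k * (n.choose k) * (k:ℝ)^j) := by
          intro k _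
          rw [expand k, Finset.mul_sum]
          exact Finset.sum_congr rfl fun j _ => by ring
        rw [Finset.sum_congr rfl l1, Finset.sum_comm]
        exact Finset.sum_congr rfl fun j _ => by rw [Finset.mul_sum]
      rw [this]
      have hsum : ∀ j ∈ range (e+1),
          (e.choose j : ℝ) * ∑ k ∈ range (n+1), (-1:ℝ)^k * (n.choose k) * (k:ℝ)^j
          = if j = n then (e.choose n : ℝ) * ((-1:ℝ)^n * n.factorial) else 0 := by
        intro j hj
        rw [IH j (by have := Finset.mem_range.mp hj; omega)]
        split_ifs with h
        · subst h; ring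
        · ring
      rw [Finset.sum_congr rfl hsum]
      by_cases he : e = n
      · subst he
        rw [Finset.sum_ite_eq' (range (e+1)) e]
        rw [if_pos (by simp)]
        rw [if_pos rfl]
        simp [Nat.factorial_succ]
        push_cast
        ring
      · have he' : e < n := by omega
        rw [Finset.sum_eq_zero fun j hj => by
          rw [if_neg]; have := Finset.mem_range.mp hj; omega]
        rw [if_neg (by omega)]
        ring


lemma altsum_poly (n : ℕ) (p : ℝ[X]) (h : p.natDegree ≤ n) :
    ∑ m ∈ range (n+1), (-1:ℝ)^m * (n.choose m) * p.eval (m:ℝ)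
      = (-1:ℝ)^n * n.factorial * p.coeff n := by
  have heval : ∀ m : ℕ, p.eval (m:ℝ) = ∑ d ∈ range (n+1), p.coeff d * (m:ℝ)^d :=
    fun m => eval_eq_sum_range' (lt_of_le_of_lt h (Nat.lt_succ_self n)) _
  have l1 : ∀ m ∈ range (n+1), (-1:ℝ)^m * (n.choose m) * p.eval (m:ℝ)
      = ∑ d ∈ range (n+1), p.coeff d * ((-1:ℝ)^m * (n.choose m) * (m:ℝ)^d) := by
    intro m _
    rw [heval m, Finset.mul_sum]
    exact Finset.sum_congr rfl fun d _ => by ring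
  rw [Finset.sum_congr rfl l1, Finset.sum_comm]
  have l2 : ∀ d ∈ range (n+1),
      (∑ m ∈ range (n+1), p.coeff d * ((-1:ℝ)^m * (n.choose m) * (m:ℝ)^d))
      = if d = n then (-1:ℝ)^n * n.factorial * p.coeff n else 0 := by
    intro d hd
    rw [← Finset.mul_sum, alt_pow n d (by have := Finset.mem_range.mp hd; omega)]
    split_ifs with hdn
    · subst hdn; ring
    · ring
  rw [Finset.sum_congr rfl l2, Finset.sum_ite_eq' (range (n+1)) n, if_pos (by simp)]


/-- generic inner sum: `a` is the "base" parameter, `b` the other one. -/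
noncomputable def innerS (a b j ℓ : ℕ) : ℝ :=
  ∑ m ∈ range (ℓ+1),
    poch (-(ℓ:ℝ)) m * poch ((a:ℝ)+(b:ℝ)+5) m * poch ((a:ℝ)+(b:ℝ)+4) m *
      poch ((a:ℝ)+(j:ℝ)+1) m /
      (poch ((a:ℝ)+3) m * poch ((j:ℝ)) m * poch ((j:ℝ)) m * (Nat.factorial m))

noncomputable def Dq (a b j : ℕ) : ℝ :=
  poch ((a:ℝ)+3) (b+1) * poch ((j:ℝ)) (a+b+5-j) * poch ((j:ℝ)) (a+1)

noncomputable def qpoly (a b j : ℕ) : ℝ[X] :=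
  (∏ t ∈ range (b+1), (X + C ((a:ℝ)+3+t))) *
  (∏ t ∈ range (a+b+5-j), (X + C ((j:ℝ)+t))) *
  (∏ t ∈ range (a+1), (X + C ((j:ℝ)+t)))

lemma qpoly_monic (a b j : ℕ) : (qpoly a b j).Monic := by
  refine Monic.mul (Monic.mul ?_ ?_) ?_ <;>
    exact monic_prod_of_monic _ _ fun t _ => monic_X_add_C _

lemma qpoly_natDegree (a b j : ℕ) (hj : j ≤ a+b+5) :
    (qpoly a b j).natDegree = 2*(a+b)+7-j := by
  have h1 : ∀ (N : ℕ) (f : ℕ → ℝ), (∏ t ∈ range N, (X + C (f t))).natDegree = N := by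
    intro N f
    rw [natDegree_prod _ _ (fun t _ => X_add_C_ne_zero (f t))]
    simp [natDegree_X_add_C]
  have m1 : ∀ (N : ℕ) (f : ℕ → ℝ), (∏ t ∈ range N, (X + C (f t))) ≠ 0 :=
    fun N f => Monic.ne_zero (monic_prod_of_monic _ _ fun t _ => monic_X_add_C _)
  rw [qpoly, natDegree_mul (mul_ne_zero (m1 _ _) (m1 _ _)) (m1 _ _),
    natDegree_mul (m1 _ _) (m1 _ _), h1, h1, h1]
  omega

lemma qpoly_eval (a b j : ℕ) (m : ℕ) :
    (qpoly a b j).eval (m:ℝ) =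
      poch ((a:ℝ)+3+m) (b+1) * poch ((j:ℝ)+m) (a+b+5-j) * poch ((j:ℝ)+m) (a+1) := by
  have h1 : ∀ (N : ℕ) (c : ℝ), (∏ t ∈ range N, (X + C (c+t))).eval (m:ℝ) = poch (c+m) N := by
    intro N c
    rw [eval_prod, poch_prod]
    exact Finset.prod_congr rfl fun t _ => by simp; ring
  rw [qpoly, eval_mul, eval_mul, h1, h1, h1]

lemma Dq_pos (a b j : ℕ) (hj1 : 1 ≤ j) : 0 < Dq a b j := by
  have h1 : (0:ℝ) < (a:ℝ)+3 := by positivity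
  have h2 : (0:ℝ) < (j:ℝ) := by exact_mod_cast hj1
  exact mul_pos (mul_pos (poch_pos h1 _) (poch_pos h2 _)) (poch_pos h2 _)

lemma innerS_summand (a b j ℓ m : ℕ) (hj1 : 1 ≤ j) (hj : j ≤ a+b+5) (hm : m ≤ ℓ) :
    poch (-(ℓ:ℝ)) m * poch ((a:ℝ)+(b:ℝ)+5) m * poch ((a:ℝ)+(b:ℝ)+4) m *
      poch ((a:ℝ)+(j:ℝ)+1) m /
      (poch ((a:ℝ)+3) m * poch ((j:ℝ)) m * poch ((j:ℝ)) m * (Nat.factorial m))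
    = (-1:ℝ)^m * (ℓ.choose m) * (qpoly a b j).eval (m:ℝ) / Dq a b j := by
  have ha3 : (0:ℝ) < (a:ℝ)+3 := by positivity
  have hjp : (0:ℝ) < (j:ℝ) := by exact_mod_cast hj1
  have hA := poch_pos ha3 m
  have hB := poch_pos hjp m
  have hfm : (0:ℝ) < (Nat.factorial m : ℝ) := by positivity
  have hD := Dq_pos a b j hj1
  have key0 : poch (-(ℓ:ℝ)) m = (-1:ℝ)^m * (ℓ.choose m) * (Nat.factorial m) := by
    have h := poch_neg_nat hm
    have hch : ((ℓ.choose m : ℕ) : ℝ) * m.factorial * (ℓ-m).factorial = ℓ.factorial := by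
      exact_mod_cast congrArg (Nat.cast (R := ℝ)) (Nat.choose_mul_factorial_mul_factorial hm)
    have hne : ((ℓ-m).factorial : ℝ) ≠ 0 := by positivity
    apply mul_right_cancel₀ hne
    rw [h, ← hch]
    ring
  have cast1 : (a:ℝ)+3+((b+1:ℕ):ℝ) = (a:ℝ)+(b:ℝ)+4 := by push_cast; ring
  have cast2 : (j:ℝ)+((a+b+5-j:ℕ):ℝ) = (a:ℝ)+(b:ℝ)+5 := by
    rw [Nat.cast_sub hj]; push_cast; ring
  have cast3 : (j:ℝ)+((a+1:ℕ):ℝ) = (a:ℝ)+(j:ℝ)+1 := by push_cast; ring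
  have key1 := poch_swap ((a:ℝ)+3) m (b+1)
  rw [cast1] at key1
  have key2 := poch_swap ((j:ℝ)) m (a+b+5-j)
  rw [cast2] at key2
  have key3 := poch_swap ((j:ℝ)) m (a+1)
  rw [cast3] at key3
  rw [qpoly_eval, key0, div_eq_div_iff (by positivity) (ne_of_gt hD)]
  have comb : (poch ((a:ℝ)+3) m * poch ((a:ℝ)+3+(m:ℝ)) (b+1)) *
      ((poch ((j:ℝ)) m * poch ((j:ℝ)+(m:ℝ)) (a+b+5-j)) *
       (poch ((j:ℝ)) m * poch ((j:ℝ)+(m:ℝ)) (a+1)))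
      = (poch ((a:ℝ)+3) (b+1) * poch ((a:ℝ)+(b:ℝ)+4) m) *
      ((poch ((j:ℝ)) (a+b+5-j) * poch ((a:ℝ)+(b:ℝ)+5) m) *
       (poch ((j:ℝ)) (a+1) * poch ((a:ℝ)+(j:ℝ)+1) m)) := by
    rw [key1, key2, key3]
  rw [Dq]
  linear_combination (-((-1:ℝ)^m * (ℓ.choose m) * (Nat.factorial m))) * comb

lemma innerS_eval (a b j ℓ : ℕ) (hj1 : 1 ≤ j) (hj : j ≤ a+b+5) (hd : (qpoly a b j).natDegree ≤ ℓ) :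
    innerS a b j ℓ = ((-1:ℝ)^ℓ * ℓ.factorial * (qpoly a b j).coeff ℓ) / Dq a b j := by
  rw [innerS]
  rw [Finset.sum_congr rfl (fun m hm =>
    innerS_summand a b j ℓ m hj1 hj (by have := Finset.mem_range.mp hm; omega))]
  rw [← Finset.sum_div]
  rw [altsum_poly ℓ _ hd]

lemma innerS_eq_zero (a b j ℓ : ℕ) (hj1 : 1 ≤ j) (hj : j ≤ a+b+5)
    (hℓ : 2*(a+b)+7-j < ℓ) : innerS a b j ℓ = 0 := by
  have hd : (qpoly a b j).natDegree ≤ ℓ := by rw [qpoly_natDegree a b j hj]; omega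
  rw [innerS_eval a b j ℓ hj1 hj hd,
    Polynomial.coeff_eq_zero_of_natDegree_lt (by rw [qpoly_natDegree a b j hj]; omega)]
  simp

lemma innerS_eq_top (a b j ℓ : ℕ) (hj1 : 1 ≤ j) (hj : j ≤ a+b+5)
    (hℓ : ℓ = 2*(a+b)+7-j) : innerS a b j ℓ = (-1:ℝ)^ℓ * ℓ.factorial / Dq a b j := by
  have hdeg : (qpoly a b j).natDegree = ℓ := by rw [qpoly_natDegree a b j hj]; omega
  have hd : (qpoly a b j).natDegree ≤ ℓ := le_of_eq hdeg
  rw [innerS_eval a b j ℓ hj1 hj hd]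
  rw [← hdeg, (qpoly_monic a b j).coeff_natDegree, hdeg]
  ring_nf

lemma poch_nat_div (a b : ℕ) : poch ((a:ℝ)+1) b = ((a+b).factorial : ℝ) / (a.factorial : ℝ) := by
  rw [eq_div_iff (by positivity)]
  exact poch_nat a b

lemma termconst (a b k : ℕ) (hk : k ≤ a+b+3) :
    poch ((a:ℝ)+3) k * poch (-((a+b+3:ℕ):ℝ)) k /
      ((((k+1).factorial : ℝ)) * (k.factorial : ℝ) * (((k+1).factorial : ℝ)) * Dq a b (k+2))
    = (-1:ℝ)^k * ((a+b+3).choose k) /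
      (((a+b+3).factorial : ℝ) * ((a+b+4).factorial : ℝ)) := by
  have e1 : poch ((a:ℝ)+3) k = ((a+2+k).factorial : ℝ) / ((a+2).factorial : ℝ) := by
    rw [show (a:ℝ)+3 = ((a+2:ℕ):ℝ)+1 from by push_cast; ring]
    exact poch_nat_div (a+2) k
  have e2 : poch (-((a+b+3:ℕ):ℝ)) k
      = (-1:ℝ)^k * ((a+b+3).factorial : ℝ) / ((a+b+3-k).factorial : ℝ) := by
    rw [eq_div_iff (by positivity)]
    exact poch_neg_nat hk
  have e3 : poch ((a:ℝ)+3) (b+1) = ((a+b+3).factorial : ℝ) / ((a+2).factorial : ℝ) := by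
    have := poch_nat_div (a+2) (b+1)
    rw [show a+2+(b+1) = a+b+3 from by omega] at this
    rw [show (a:ℝ)+3 = ((a+2:ℕ):ℝ)+1 from by push_cast; ring]
    exact this
  have e4 : poch (((k+2:ℕ)):ℝ) (a+b+5-(k+2)) = ((a+b+4).factorial : ℝ) / ((k+1).factorial : ℝ) := by
    have := poch_nat_div (k+1) (a+b+3-k)
    rw [show k+1+(a+b+3-k) = a+b+4 from by omega] at this
    rw [show a+b+5-(k+2) = a+b+3-k from by omega]
    rw [show (((k+2:ℕ)):ℝ) = ((k+1:ℕ):ℝ)+1 from by push_cast; ring]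
    exact this
  have e5 : poch (((k+2:ℕ)):ℝ) (a+1) = ((a+2+k).factorial : ℝ) / ((k+1).factorial : ℝ) := by
    have := poch_nat_div (k+1) (a+1)
    rw [show k+1+(a+1) = a+2+k from by omega] at this
    rw [show (((k+2:ℕ)):ℝ) = ((k+1:ℕ):ℝ)+1 from by push_cast; ring]
    exact this
  have e6 : (((a+b+3).choose k : ℕ) : ℝ)
      = ((a+b+3).factorial : ℝ) / ((k.factorial : ℝ) * ((a+b+3-k).factorial : ℝ)) := by
    rw [eq_div_iff (by positivity)]
    have := Nat.choose_mul_factorial_mul_factorial hk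
    push_cast [← this]
    ring
  rw [Dq, e1, e2, e3, e4, e5, e6]
  have p1 : ((a+2).factorial : ℝ) ≠ 0 := by positivity
  have p2 : ((a+b+3-k).factorial : ℝ) ≠ 0 := by positivity
  have p3 : ((k+1).factorial : ℝ) ≠ 0 := by positivity
  have p4 : (k.factorial : ℝ) ≠ 0 := by positivity
  have p5 : ((a+b+3).factorial : ℝ) ≠ 0 := by positivity
  have p6 : ((a+b+4).factorial : ℝ) ≠ 0 := by positivity
  have p7 : ((a+2+k).factorial : ℝ) ≠ 0 := by positivity
  field_simp


lemma sumc1_eval (a b : ℕ) (y : ℝ) :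
    ∑ ℓ ∈ Finset.range (2*(a+b)+6),
      (-1:ℝ)^ℓ *
      (poch ((a:ℝ)+3) (2*(a+b)+7-ℓ-2) * poch (-((a+b+3:ℕ):ℝ)) (2*(a+b)+7-ℓ-2) /
        (((2*(a+b)+7-ℓ-1).factorial : ℝ) * ((2*(a+b)+7-ℓ-2).factorial : ℝ) * (ℓ.factorial : ℝ) *
          ((2*(a+b)+7-ℓ-1).factorial : ℝ))) *
      innerS a b (2*(a+b)+7-ℓ) ℓ * y^(ℓ+1)
    = y^(a+b+3) * (y-1)^(a+b+3) /
        (((a+b+3).factorial : ℝ) * ((a+b+4).factorial : ℝ)) := by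
  rw [show 2*(a+b)+6 = (a+b+2) + (a+b+4) from by omega, Finset.sum_range_add]
  have h0 : ∀ ℓ ∈ range (a+b+2),
      (-1:ℝ)^ℓ *
      (poch ((a:ℝ)+3) (2*(a+b)+7-ℓ-2) * poch (-((a+b+3:ℕ):ℝ)) (2*(a+b)+7-ℓ-2) /
        (((2*(a+b)+7-ℓ-1).factorial : ℝ) * ((2*(a+b)+7-ℓ-2).factorial : ℝ) * (ℓ.factorial : ℝ) *
          ((2*(a+b)+7-ℓ-1).factorial : ℝ))) *
      innerS a b (2*(a+b)+7-ℓ) ℓ * y^(ℓ+1) = 0 := by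
    intro ℓ hℓ
    have hℓ' := Finset.mem_range.mp hℓ
    have hz : poch (-((a+b+3:ℕ):ℝ)) (2*(a+b)+7-ℓ-2) = 0 :=
      poch_neg_nat_eq_zero (by omega)
    rw [hz]; ring
  rw [Finset.sum_eq_zero h0, zero_add]
  have h1 : ∀ t ∈ range (a+b+4),
      (-1:ℝ)^(a+b+2+t) *
      (poch ((a:ℝ)+3) (2*(a+b)+7-(a+b+2+t)-2) * poch (-((a+b+3:ℕ):ℝ)) (2*(a+b)+7-(a+b+2+t)-2) /
        (((2*(a+b)+7-(a+b+2+t)-1).factorial : ℝ) * ((2*(a+b)+7-(a+b+2+t)-2).factorial : ℝ) *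
          ((a+b+2+t).factorial : ℝ) * ((2*(a+b)+7-(a+b+2+t)-1).factorial : ℝ))) *
      innerS a b (2*(a+b)+7-(a+b+2+t)) (a+b+2+t) * y^(a+b+2+t+1)
      = y^t * (-1:ℝ)^(a+b+3-t) * (((a+b+3).choose t : ℕ) : ℝ) *
          (y^(a+b+3) / (((a+b+3).factorial : ℝ) * ((a+b+4).factorial : ℝ))) := by
    intro t ht
    have ht' := Finset.mem_range.mp ht
    have e1 : 2*(a+b)+7-(a+b+2+t)-2 = a+b+3-t := by omega
    have e2 : 2*(a+b)+7-(a+b+2+t)-1 = (a+b+3-t)+1 := by omega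
    have e3 : 2*(a+b)+7-(a+b+2+t) = (a+b+3-t)+2 := by omega
    rw [e1, e2, e3]
    rw [innerS_eq_top a b ((a+b+3-t)+2) (a+b+2+t) (by omega) (by omega) (by omega)]
    have sgn : (-1:ℝ)^(a+b+2+t) * (-1:ℝ)^(a+b+2+t) = 1 := by
      rw [← pow_add]; exact Even.neg_one_pow ⟨a+b+2+t, by ring⟩
    have hL : ((a+b+2+t).factorial : ℝ) ≠ 0 := by positivity
    have step : (-1:ℝ)^(a+b+2+t) *
        (poch ((a:ℝ)+3) (a+b+3-t) * poch (-((a+b+3:ℕ):ℝ)) (a+b+3-t) /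
          ((((a+b+3-t)+1).factorial : ℝ) * (((a+b+3-t)).factorial : ℝ) *
            ((a+b+2+t).factorial : ℝ) * (((a+b+3-t)+1).factorial : ℝ))) *
        ((-1:ℝ)^(a+b+2+t) * ((a+b+2+t).factorial : ℝ) / Dq a b ((a+b+3-t)+2)) * y^(a+b+2+t+1)
        = ((-1:ℝ)^(a+b+2+t) * (-1:ℝ)^(a+b+2+t)) *
          (((a+b+2+t).factorial : ℝ) / ((a+b+2+t).factorial : ℝ)) *
          ((poch ((a:ℝ)+3) (a+b+3-t) * poch (-((a+b+3:ℕ):ℝ)) (a+b+3-t) /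
            ((((a+b+3-t)+1).factorial : ℝ) * (((a+b+3-t)).factorial : ℝ) *
              (((a+b+3-t)+1).factorial : ℝ) * Dq a b ((a+b+3-t)+2))) * y^(a+b+2+t+1)) := by
      ring
    rw [step, sgn, div_self hL, one_mul, one_mul]
    rw [termconst a b (a+b+3-t) (by omega)]
    rw [Nat.choose_symm (by omega : t ≤ a+b+3)]
    rw [show a+b+2+t+1 = (a+b+3)+t from by omega, pow_add]
    ring
  rw [Finset.sum_congr rfl h1, ← Finset.sum_mul, ← add_pow]
  ring

lemma sumc2_eval (a b : ℕ) (z : ℝ) :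
    ∑ ℓ ∈ Finset.range (2*(a+b)+6),
      (poch ((a:ℝ)+3) (2*(a+b)+7-ℓ-2) * poch (-((a+b+3:ℕ):ℝ)) (2*(a+b)+7-ℓ-2) /
        (((2*(a+b)+7-ℓ-1).factorial : ℝ) * ((2*(a+b)+7-ℓ-2).factorial : ℝ) * (ℓ.factorial : ℝ) *
          ((2*(a+b)+7-ℓ-1).factorial : ℝ))) *
      innerS a b (2*(a+b)+7-ℓ) ℓ * z^(ℓ+1)
    = -(z^(a+b+3) * (z+1)^(a+b+3)) /
        (((a+b+3).factorial : ℝ) * ((a+b+4).factorial : ℝ)) := by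
  rw [show 2*(a+b)+6 = (a+b+2) + (a+b+4) from by omega, Finset.sum_range_add]
  have h0 : ∀ ℓ ∈ range (a+b+2),
      (poch ((a:ℝ)+3) (2*(a+b)+7-ℓ-2) * poch (-((a+b+3:ℕ):ℝ)) (2*(a+b)+7-ℓ-2) /
        (((2*(a+b)+7-ℓ-1).factorial : ℝ) * ((2*(a+b)+7-ℓ-2).factorial : ℝ) * (ℓ.factorial : ℝ) *
          ((2*(a+b)+7-ℓ-1).factorial : ℝ))) *
      innerS a b (2*(a+b)+7-ℓ) ℓ * z^(ℓ+1) = 0 := by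
    intro ℓ hℓ
    have hℓ' := Finset.mem_range.mp hℓ
    have hz : poch (-((a+b+3:ℕ):ℝ)) (2*(a+b)+7-ℓ-2) = 0 :=
      poch_neg_nat_eq_zero (by omega)
    rw [hz]; ring
  rw [Finset.sum_eq_zero h0, zero_add]
  have h1 : ∀ t ∈ range (a+b+4),
      (poch ((a:ℝ)+3) (2*(a+b)+7-(a+b+2+t)-2) * poch (-((a+b+3:ℕ):ℝ)) (2*(a+b)+7-(a+b+2+t)-2) /
        (((2*(a+b)+7-(a+b+2+t)-1).factorial : ℝ) * ((2*(a+b)+7-(a+b+2+t)-2).factorial : ℝ) *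
          ((a+b+2+t).factorial : ℝ) * ((2*(a+b)+7-(a+b+2+t)-1).factorial : ℝ))) *
      innerS a b (2*(a+b)+7-(a+b+2+t)) (a+b+2+t) * z^(a+b+2+t+1)
      = z^t * (1:ℝ)^(a+b+3-t) * (((a+b+3).choose t : ℕ) : ℝ) *
          (-(z^(a+b+3)) / (((a+b+3).factorial : ℝ) * ((a+b+4).factorial : ℝ))) := by
    intro t ht
    have ht' := Finset.mem_range.mp ht
    have e1 : 2*(a+b)+7-(a+b+2+t)-2 = a+b+3-t := by omega
    have e2 : 2*(a+b)+7-(a+b+2+t)-1 = (a+b+3-t)+1 := by omega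
    have e3 : 2*(a+b)+7-(a+b+2+t) = (a+b+3-t)+2 := by omega
    rw [e1, e2, e3]
    rw [innerS_eq_top a b ((a+b+3-t)+2) (a+b+2+t) (by omega) (by omega) (by omega)]
    have hL : ((a+b+2+t).factorial : ℝ) ≠ 0 := by positivity
    have step : (poch ((a:ℝ)+3) (a+b+3-t) * poch (-((a+b+3:ℕ):ℝ)) (a+b+3-t) /
          ((((a+b+3-t)+1).factorial : ℝ) * (((a+b+3-t)).factorial : ℝ) *
            ((a+b+2+t).factorial : ℝ) * (((a+b+3-t)+1).factorial : ℝ))) *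
        ((-1:ℝ)^(a+b+2+t) * ((a+b+2+t).factorial : ℝ) / Dq a b ((a+b+3-t)+2)) * z^(a+b+2+t+1)
        = (-1:ℝ)^(a+b+2+t) *
          (((a+b+2+t).factorial : ℝ) / ((a+b+2+t).factorial : ℝ)) *
          ((poch ((a:ℝ)+3) (a+b+3-t) * poch (-((a+b+3:ℕ):ℝ)) (a+b+3-t) /
            ((((a+b+3-t)+1).factorial : ℝ) * (((a+b+3-t)).factorial : ℝ) *
              (((a+b+3-t)+1).factorial : ℝ) * Dq a b ((a+b+3-t)+2))) * z^(a+b+2+t+1)) := by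
      ring
    rw [step, div_self hL, mul_one]
    rw [termconst a b (a+b+3-t) (by omega)]
    rw [Nat.choose_symm (by omega : t ≤ a+b+3)]
    have sgn : (-1:ℝ)^(a+b+2+t) * (-1:ℝ)^(a+b+3-t) = -1 := by
      rw [← pow_add, show (a+b+2+t)+(a+b+3-t) = 2*(a+b+2)+1 from by omega]
      exact Odd.neg_one_pow ⟨a+b+2, by ring⟩
    have step2 : (-1:ℝ)^(a+b+2+t) *
        ((-1:ℝ)^(a+b+3-t) * (((a+b+3).choose t : ℕ) : ℝ) /
          (((a+b+3).factorial : ℝ) * ((a+b+4).factorial : ℝ)) * z^(a+b+2+t+1))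
        = ((-1:ℝ)^(a+b+2+t) * (-1:ℝ)^(a+b+3-t)) *
          ((((a+b+3).choose t : ℕ) : ℝ) /
            (((a+b+3).factorial : ℝ) * ((a+b+4).factorial : ℝ)) * z^(a+b+2+t+1)) := by
      ring
    rw [step2, sgn]
    rw [show a+b+2+t+1 = (a+b+3)+t from by omega, pow_add]
    ring
  rw [Finset.sum_congr rfl h1, ← Finset.sum_mul, ← add_pow]
  ring

lemma AorB (a b i ℓ : ℕ) (hi : 2*(a+b)+8 ≤ i) (hℓ : ℓ < i-1) :
    poch (-((a+b+3:ℕ):ℝ)) (i-ℓ-2) = 0 ∨ innerS a b (i-ℓ) ℓ = 0 := by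
  rcases lt_or_ge (a+b+3) (i-ℓ-2) with h | h
  · exact Or.inl (poch_neg_nat_eq_zero h)
  · exact Or.inr (innerS_eq_zero a b (i-ℓ) ℓ (by omega) (by omega) (by omega))


/-- for nonnegative integers `α`, `β` the coefficients
`c_i(α,β,x) = c_i^{(1)}(α,β,x) + c_i^{(2)}(α,β,x)` vanish for `i > 2α+2β+6`. -/
theorem cCoef_eq_zero_of_gt (α β : ℕ) (i : ℕ) (hi : 2 * α + 2 * β + 6 < i) (x : ℝ) :
    cCoef (α : ℝ) (β : ℝ) i x = 0 := by
  unfold cCoef cCoef1 cCoef2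
  have conv1 : ∀ ℓ ∈ Finset.range (i-1),
      (-1 : ℝ) ^ ℓ *
      (poch ((β:ℝ) + 3) (i - ℓ - 2) * poch (-(α:ℝ) - (β:ℝ) - 3) (i - ℓ - 2) /
        (Nat.factorial (i - ℓ - 1) * Nat.factorial (i - ℓ - 2) * Nat.factorial ℓ *
          Nat.factorial (i - ℓ - 1))) *
      (∑ m ∈ Finset.range (ℓ + 1),
        poch (-(ℓ : ℝ)) m * poch ((α:ℝ) + (β:ℝ) + 5) m * poch ((α:ℝ) + (β:ℝ) + 4) m *
          poch ((β:ℝ) + (i : ℝ) - (ℓ : ℝ) + 1) m /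
          (poch ((β:ℝ) + 3) m * poch ((i : ℝ) - (ℓ : ℝ)) m * poch ((i : ℝ) - (ℓ : ℝ)) m *
            Nat.factorial m)) *
      ((x + 1) / 2) ^ (ℓ + 1)
      = (-1 : ℝ) ^ ℓ *
      (poch ((β:ℝ) + 3) (i - ℓ - 2) * poch (-((β+α+3:ℕ):ℝ)) (i - ℓ - 2) /
        (((i - ℓ - 1).factorial : ℝ) * ((i - ℓ - 2).factorial : ℝ) * (ℓ.factorial : ℝ) *
          ((i - ℓ - 1).factorial : ℝ))) *
      innerS β α (i-ℓ) ℓ * ((x + 1) / 2) ^ (ℓ + 1) := by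
    intro ℓ hℓ
    have hℓ' := Finset.mem_range.mp hℓ
    have c1 : -(α:ℝ) - (β:ℝ) - 3 = -((β+α+3:ℕ):ℝ) := by push_cast; ring
    have c2 : ∑ m ∈ Finset.range (ℓ + 1),
        poch (-(ℓ : ℝ)) m * poch ((α:ℝ) + (β:ℝ) + 5) m * poch ((α:ℝ) + (β:ℝ) + 4) m *
          poch ((β:ℝ) + (i : ℝ) - (ℓ : ℝ) + 1) m /
          (poch ((β:ℝ) + 3) m * poch ((i : ℝ) - (ℓ : ℝ)) m * poch ((i : ℝ) - (ℓ : ℝ)) m *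
            Nat.factorial m) = innerS β α (i-ℓ) ℓ := by
      unfold innerS
      refine Finset.sum_congr rfl fun m _ => ?_
      rw [show (α:ℝ) + (β:ℝ) + 5 = (β:ℝ) + (α:ℝ) + 5 from by ring,
        show (α:ℝ) + (β:ℝ) + 4 = (β:ℝ) + (α:ℝ) + 4 from by ring,
        show (β:ℝ) + (i:ℝ) - (ℓ:ℝ) + 1 = (β:ℝ) + ((i-ℓ:ℕ):ℝ) + 1 from by
          rw [Nat.cast_sub (by omega)]; ring,
        show (i:ℝ) - (ℓ:ℝ) = ((i-ℓ:ℕ):ℝ) from by rw [Nat.cast_sub (by omega)]]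
    rw [c1, c2]
  have conv2 : ∀ ℓ ∈ Finset.range (i-1),
      (poch ((α:ℝ) + 3) (i - ℓ - 2) * poch (-(α:ℝ) - (β:ℝ) - 3) (i - ℓ - 2) /
        (Nat.factorial (i - ℓ - 1) * Nat.factorial (i - ℓ - 2) * Nat.factorial ℓ *
          Nat.factorial (i - ℓ - 1))) *
      (∑ m ∈ Finset.range (ℓ + 1),
        poch (-(ℓ : ℝ)) m * poch ((α:ℝ) + (β:ℝ) + 5) m * poch ((α:ℝ) + (β:ℝ) + 4) m *
          poch ((α:ℝ) + (i : ℝ) - (ℓ : ℝ) + 1) m /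
          (poch ((α:ℝ) + 3) m * poch ((i : ℝ) - (ℓ : ℝ)) m * poch ((i : ℝ) - (ℓ : ℝ)) m *
            Nat.factorial m)) *
      ((x - 1) / 2) ^ (ℓ + 1)
      = (poch ((α:ℝ) + 3) (i - ℓ - 2) * poch (-((α+β+3:ℕ):ℝ)) (i - ℓ - 2) /
        (((i - ℓ - 1).factorial : ℝ) * ((i - ℓ - 2).factorial : ℝ) * (ℓ.factorial : ℝ) *
          ((i - ℓ - 1).factorial : ℝ))) *
      innerS α β (i-ℓ) ℓ * ((x - 1) / 2) ^ (ℓ + 1) := by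
    intro ℓ hℓ
    have hℓ' := Finset.mem_range.mp hℓ
    have c1 : -(α:ℝ) - (β:ℝ) - 3 = -((α+β+3:ℕ):ℝ) := by push_cast; ring
    have c2 : ∑ m ∈ Finset.range (ℓ + 1),
        poch (-(ℓ : ℝ)) m * poch ((α:ℝ) + (β:ℝ) + 5) m * poch ((α:ℝ) + (β:ℝ) + 4) m *
          poch ((α:ℝ) + (i : ℝ) - (ℓ : ℝ) + 1) m /
          (poch ((α:ℝ) + 3) m * poch ((i : ℝ) - (ℓ : ℝ)) m * poch ((i : ℝ) - (ℓ : ℝ)) m *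
            Nat.factorial m) = innerS α β (i-ℓ) ℓ := by
      unfold innerS
      refine Finset.sum_congr rfl fun m _ => ?_
      rw [show (α:ℝ) + (i:ℝ) - (ℓ:ℝ) + 1 = (α:ℝ) + ((i-ℓ:ℕ):ℝ) + 1 from by
          rw [Nat.cast_sub (by omega)]; ring,
        show (i:ℝ) - (ℓ:ℝ) = ((i-ℓ:ℕ):ℝ) from by rw [Nat.cast_sub (by omega)]]
    rw [c1, c2]
  rw [Finset.sum_congr rfl conv1, Finset.sum_congr rfl conv2]
  rcases le_or_gt (2*α+2*β+8) i with hA | hB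
  · rw [Finset.sum_eq_zero (fun ℓ hℓ => ?_), Finset.sum_eq_zero (fun ℓ hℓ => ?_)]
    · ring
    · rcases AorB α β i ℓ (by omega) (Finset.mem_range.mp hℓ) with h | h <;> (rw [h]; ring)
    · rcases AorB β α i ℓ (by omega) (Finset.mem_range.mp hℓ) with h | h <;> (rw [h]; ring)
  · have hi7 : i = 2*α+2*β+7 := by omega
    subst hi7
    simp only [show (2*α+2*β+7 : ℕ) = 2*(α+β)+7 from by omega, show β+α+3 = α+β+3 from by omega]
    have S1 := sumc1_eval β α ((x+1)/2)
    simp only [Nat.add_comm β α] at S1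
    have S2 := sumc2_eval α β ((x-1)/2)
    rw [show 2*(α+β)+7-1 = 2*(α+β)+6 from by omega, S1, S2]
    rw [show 2*(α+β)+7-2 = 2*(α+β+2)+1 from by omega]
    rw [Odd.neg_pow ⟨α+β+2, by ring⟩ (2:ℝ)]
    rw [show (x+1)/2 - 1 = (x-1)/2 from by ring, show (x-1)/2 + 1 = (x+1)/2 from by ring]
    ring
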